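/- For all nonnegative integers m, n, real α ∈ ℝ, and complex b ≠ 0, q ≠ 0, z₁, z₂: p_{m,n}(z₁, z₂; b | 1/q) = (-1)^{m+n} (b/q)^{(1-α)m + αn} q^{-(m+n)(m+n-1)/2} p_{m,n}((b/q)^α z₁, (b/q)^{1-α} z₂; 1/b | q). -/

import Mathlib

open Finset Filter

noncomputable def qPoch (a q : ℂ) (n : ℕ) : ℂ :=
  ∏ j ∈ Finset.range n, (1 - a * q ^ j)

noncomputable def qbinom (q : ℂ) : ℕ → ℕ → ℂ
  | _, 0 => 1
  | 0, _ + 1 => 0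
  | m + 1, k + 1 => qbinom q m k + q ^ (k + 1) * qbinom q m (k + 1)

/-- The first q-analogue of the 2D Hermite polynomials. -/
noncomputable def H2D (q z1 z2 : ℂ) (m n : ℕ) : ℂ :=
  ∑ k ∈ Finset.range (min m n + 1),
    qbinom q m k * qbinom q n k * (-1) ^ k * q ^ (k.choose 2) * qPoch q q k *
      z1 ^ (m - k) * z2 ^ (n - k)

/-- The second q-analogue of the 2D Hermite polynomials. -/
noncomputable def h2D (q z1 z2 : ℂ) (m n : ℕ) : ℂ :=
  ∑ j ∈ Finset.range (min m n + 1),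
    qbinom q m j * qbinom q n j * q ^ ((m - j) * (n - j)) * (-1) ^ j * qPoch q q j *
      z1 ^ (m - j) * z2 ^ (n - j)

/-- The q-2D ultraspherical (q-disk / q-Zernike) polynomials. -/
noncomputable def p2D (q b z1 z2 : ℂ) (m n : ℕ) : ℂ :=
  ∑ k ∈ Finset.range (min m n + 1),
    qbinom q m k * qbinom q n k * (-1) ^ k * q ^ (k.choose 2) * qPoch q q k *
      qPoch (b * q) q (m + n - k) * z1 ^ (m - k) * z2 ^ (n - k)

/-- The infinite q-Pochhammer product (a;q)_∞. -/
noncomputable def qPochInf (a q : ℂ) : ℂ :=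
  ∏' j : ℕ, (1 - a * q ^ j)

/-! Both sides are sums over the same index `k`. Inverting the base turns each factor into its
base-`q` counterpart times a power of `q`: `[m, k]_{1/q} = q^{-k(m-k)} [m, k]_q` and
`(a/q; 1/q)_n = (-a)^n q^{-C(n+1,2)} (q/a; q)_n`; since `C(k,2) + C(k+1,2) = k²`, the powers of `q`
collect termwise into `q^{-C(m+n,2)} (b/q)^{m+n-k}`. This is the case `α = 0`. The general case is
a rescaling, because `u^n p(u z₁, v z₂) = u^m p(z₁, u v z₂)` termwise, applied with
`u = (b/q)^α`, `v = (b/q)^{1-α}`. -/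

theorem Nat.choose_two_add (a b : ℕ) : (a + b).choose 2 = a.choose 2 + b.choose 2 + a * b := by
  induction b with
  | zero => simp
  | succ b ih =>
    rw [← add_assoc, Nat.choose_succ_succ', ih, Nat.choose_succ_succ' b, Nat.choose_one_right,
      Nat.choose_one_right]
    ring

theorem Nat.choose_two_add_choose_two_succ (k : ℕ) : k.choose 2 + (k + 1).choose 2 = k * k := by
  have h₁ := Nat.choose_two_add k 1
  have h₂ := Nat.add_one_mul_choose_eq k 1
  simp only [Nat.choose_one_right, Nat.choose_eq_zero_of_lt one_lt_two] at h₁ h₂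
  linarith

theorem qbinom_eq_zero_of_lt (q : ℂ) : ∀ {m k : ℕ}, m < k → qbinom q m k = 0
  | 0, _ + 1, _ => rfl
  | m + 1, k + 1, h => by
    rw [qbinom, qbinom_eq_zero_of_lt q (by omega), qbinom_eq_zero_of_lt q (by omega), mul_zero,
      add_zero]

theorem qbinom_succ_succ' (q : ℂ) :
    ∀ m k : ℕ, qbinom q (m + 1) (k + 1) = q ^ (m - k) * qbinom q m k + qbinom q m (k + 1)
  | 0, 0 => by simp [qbinom]
  | 0, k + 1 => by simp [qbinom]
  | m + 1, 0 => by
    have ih := qbinom_succ_succ' q m 0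
    simp only [qbinom, Nat.sub_zero, zero_add, pow_one, mul_one] at ih ⊢
    linear_combination q * ih
  | m + 1, k + 1 => by
    have pascal : ∀ m k,
        qbinom q (m + 1) (k + 1) = qbinom q m k + q ^ (k + 1) * qbinom q m (k + 1) := fun _ _ => rfl
    obtain hkm | hmk := Nat.lt_or_ge k m
    · obtain ⟨d, rfl⟩ : ∃ d, m = k + 1 + d := ⟨m - (k + 1), by omega⟩
      have ih₁ := qbinom_succ_succ' q (k + 1 + d) k
      have ih₂ := qbinom_succ_succ' q (k + 1 + d) (k + 1)
      rw [show k + 1 + d - k = d + 1 by omega] at ih₁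
      rw [show k + 1 + d - (k + 1) = d by omega] at ih₂
      rw [show k + 1 + d + 1 - (k + 1) = d + 1 by omega]
      linear_combination pascal (k + 1 + d + 1) (k + 1) + ih₁ - q ^ (d + 1) * pascal (k + 1 + d) k
        + q ^ (k + 2) * ih₂ - pascal (k + 1 + d) (k + 1)
    · rw [Nat.sub_eq_zero_of_le (Nat.succ_le_succ hmk), pow_zero, one_mul, pascal (m + 1),
        qbinom_eq_zero_of_lt q (m := m + 1) (k := k + 1 + 1) (by omega), mul_zero, add_zero]

theorem qbinom_inv_mul_pow {q : ℂ} (hq : q ≠ 0) :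
    ∀ m k : ℕ, qbinom q⁻¹ m k * q ^ (k * m) = qbinom q m k * q ^ (k * k)
  | _, 0 => by simp [qbinom]
  | 0, k + 1 => by simp [qbinom]
  | m + 1, k + 1 => by
    obtain hkm | hmk := le_or_gt k m
    · obtain ⟨d, rfl⟩ : ∃ d, m = k + d := ⟨m - k, by omega⟩
      have ih₁ := qbinom_inv_mul_pow hq (k + d) k
      have ih₂ := qbinom_inv_mul_pow hq (k + d) (k + 1)
      rw [qbinom, qbinom_succ_succ', Nat.add_sub_cancel_left]
      have hinv : q⁻¹ ^ (k + 1) * q ^ ((k + 1) * (k + d + 1)) = q ^ ((k + 1) * (k + d)) := by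
        rw [mul_add_one, pow_add q, inv_pow]
        field_simp
      linear_combination q ^ (2 * k + d + 1) * ih₁ + ih₂ + qbinom q⁻¹ (k + d) (k + 1) * hinv
    · rw [qbinom_eq_zero_of_lt _ (by omega : m + 1 < k + 1),
        qbinom_eq_zero_of_lt _ (by omega : m + 1 < k + 1), zero_mul, zero_mul]

theorem qbinom_inv_add {q : ℂ} (hq : q ≠ 0) (k i : ℕ) :
    qbinom q⁻¹ (k + i) k = qbinom q (k + i) k / q ^ (k * i) := by
  rw [eq_div_iff (pow_ne_zero _ hq)]
  have h := qbinom_inv_mul_pow hq (k + i) k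
  rw [mul_add, pow_add] at h
  apply mul_right_cancel₀ (pow_ne_zero (k * k) hq)
  linear_combination h

theorem qPoch_succ (a q : ℂ) (n : ℕ) : qPoch a q (n + 1) = qPoch a q n * (1 - a * q ^ n) :=
  prod_range_succ _ _

theorem qPoch_inv_mul_inv {a q : ℂ} (ha : a ≠ 0) (hq : q ≠ 0) :
    ∀ n : ℕ, qPoch (a * q⁻¹) q⁻¹ n = (-a) ^ n * qPoch (a⁻¹ * q) q n / q ^ (n + 1).choose 2
  | 0 => by simp [qPoch]
  | n + 1 => by
    rw [qPoch_succ, qPoch_inv_mul_inv ha hq n, qPoch_succ, Nat.choose_two_add (n + 1) 1,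
      Nat.choose_eq_zero_of_lt one_lt_two, inv_pow]
    field_simp
    ring

theorem p2D_inv {b q : ℂ} (hb : b ≠ 0) (hq : q ≠ 0) (z1 z2 : ℂ) (m n : ℕ) :
    p2D q⁻¹ b z1 z2 m n =
      (-1) ^ (m + n) * (b / q) ^ m * (q ^ (m + n).choose 2)⁻¹ * p2D q b⁻¹ z1 (b / q * z2) m n := by
  unfold p2D
  rw [mul_sum]
  refine sum_congr rfl fun k hk => ?_
  obtain ⟨i, rfl⟩ : ∃ i, m = k + i := ⟨m - k, by grind⟩
  obtain ⟨j, rfl⟩ : ∃ j, n = k + j := ⟨n - k, by grind⟩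
  have hqq := qPoch_inv_mul_inv one_ne_zero hq k
  rw [one_mul, inv_one, one_mul] at hqq
  have hsq : q ^ k.choose 2 * q ^ (k + 1).choose 2 = q ^ (k * k) := by
    rw [← pow_add, Nat.choose_two_add_choose_two_succ]
  rw [show k + i + (k + j) - k = k + i + j by omega, Nat.add_sub_cancel_left,
    Nat.add_sub_cancel_left, qbinom_inv_add hq, qbinom_inv_add hq, hqq, qPoch_inv_mul_inv hb hq,
    show k + i + (k + j) = k + i + j + k by ring, Nat.choose_two_add _ k,
    Nat.choose_two_add (k + i + j) 1, Nat.choose_eq_zero_of_lt one_lt_two,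
    show (k + i + j) * k = k * k + (k * i + k * j) by ring]
  simp only [pow_add, inv_pow, div_pow, mul_pow]
  rw [← hsq]
  field_simp
  ring

theorem pow_mul_p2D_mul_mul (q b u v z1 z2 : ℂ) (m n : ℕ) :
    u ^ n * p2D q b (u * z1) (v * z2) m n = u ^ m * p2D q b z1 (u * v * z2) m n := by
  unfold p2D
  rw [mul_sum, mul_sum]
  refine sum_congr rfl fun k hk => ?_
  obtain ⟨i, rfl⟩ : ∃ i, m = k + i := ⟨m - k, by grind⟩
  obtain ⟨j, rfl⟩ : ∃ j, n = k + j := ⟨n - k, by grind⟩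
  simp only [Nat.add_sub_cancel_left]
  ring

theorem cpow_mul_p2D_cpow_mul_cpow_mul {x : ℂ} (hx : x ≠ 0) (q b z1 z2 : ℂ) (α : ℝ) (m n : ℕ) :
    x ^ ((((1 - α) * m + α * n : ℝ)) : ℂ) *
        p2D q b (x ^ ((α : ℝ) : ℂ) * z1) (x ^ (((1 - α : ℝ)) : ℂ) * z2) m n =
      x ^ m * p2D q b z1 (x * z2) m n := by
  set u := x ^ ((α : ℝ) : ℂ)
  have hu : u ≠ 0 := Complex.cpow_ne_zero_iff.2 (Or.inl hx)
  have huv : u * x ^ (((1 - α : ℝ)) : ℂ) = x := by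
    rw [← Complex.cpow_add _ _ hx]
    push_cast
    simp
  have hweight : x ^ ((((1 - α) * m + α * n : ℝ)) : ℂ) * u ^ m = x ^ m * u ^ n := by
    rw [← Complex.cpow_nat_mul, ← Complex.cpow_nat_mul, ← Complex.cpow_natCast x m,
      ← Complex.cpow_add _ _ hx, ← Complex.cpow_add _ _ hx]
    congr 1
    push_cast
    ring
  have hscale := pow_mul_p2D_mul_mul q b u (x ^ (((1 - α : ℝ)) : ℂ)) z1 z2 m n
  rw [huv] at hscale
  apply mul_left_cancel₀ (pow_ne_zero m hu)
  linear_combination p2D q b (u * z1) (x ^ (((1 - α : ℝ)) : ℂ) * z2) m n * hweight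
    + x ^ m * hscale

theorem stmt18 (m n : ℕ) (α : ℝ) (b q z1 z2 : ℂ) (hb : b ≠ 0) (hq : q ≠ 0) :
    p2D (1 / q) b z1 z2 m n =
      (-1) ^ (m + n) * (b / q) ^ ((((1 - α) * m + α * n : ℝ)) : ℂ) *
        (q ^ ((m + n).choose 2))⁻¹ *
          p2D q (1 / b) ((b / q) ^ ((α : ℝ) : ℂ) * z1) ((b / q) ^ (((1 - α : ℝ)) : ℂ) * z2)
            m n := by
  have hrescale := cpow_mul_p2D_cpow_mul_cpow_mul (div_ne_zero hb hq) q b⁻¹ z1 z2 α m n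
  rw [one_div, one_div, p2D_inv hb hq]
  linear_combination -(-1) ^ (m + n) * (q ^ (m + n).choose 2)⁻¹ * hrescale
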